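/- arXiv:1809.03493 — 5 statements merged into one kernel-verified Lean document; each statement's English description precedes it below -/
import Mathlib

section
/- Let L be a ladder-like graph on 2m vertices with m ≥ 6. Then the graph G = L − {u_1 v_1, u_4 v_4} is 4-pancyclic, i.e., it contains a cycle of every length ℓ with 4 ≤ ℓ ≤ 2m. -/
open SimpleGraph

/-- `IsKRegular G k`: every vertex has exactly `k` neighbours. -/
def IsKRegular {V : Type*} (G : SimpleGraph V) (k : ℕ) : Prop :=
  ∀ v : V, (G.neighborSet v).ncard = k

/-- `IsKConnected G k`: `G` has more than `k` vertices and removing any set of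
fewer than `k` vertices leaves a connected graph. -/
def IsKConnected {V : Type*} (G : SimpleGraph V) (k : ℕ) : Prop :=
  k < Nat.card V ∧ ∀ S : Set V, S.ncard < k → (G.induce (Sᶜ : Set V)).Connected

/-- `G` contains a cycle of length `ℓ`. -/
def HasCycleOfLength {V : Type*} (G : SimpleGraph V) (ℓ : ℕ) : Prop :=
  ∃ (v : V) (c : G.Walk v v), c.IsCycle ∧ c.length = ℓ

/-- The ladder-like graph on `2m` vertices: two disjoint `m`-cycles
`u_1,...,u_m` (side `false`) and `v_1,...,v_m` (side `true`), the matching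
edges `u_i v_i`, and the two extra edges `u_1 v_4` and `u_4 v_1`.
Vertex `(false, i)` is `u_{i+1}` and `(true, i)` is `v_{i+1}`. -/
def ladderLike (m : ℕ) [NeZero m] : SimpleGraph (Bool × Fin m) where
  Adj p q :=
    (p.1 = q.1 ∧ p.2 ≠ q.2 ∧ (q.2 = p.2 + 1 ∨ p.2 = q.2 + 1)) ∨
    (p.1 ≠ q.1 ∧ (p.2 = q.2 ∨ (p.2 = 0 ∧ q.2 = 3) ∨ (p.2 = 3 ∧ q.2 = 0)))
  symm := by
    constructor
    rintro ⟨a, i⟩ ⟨b, j⟩ (⟨h1, h2, h3⟩ | ⟨h1, h2⟩)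
    · exact Or.inl ⟨h1.symm, h2.symm, h3.symm⟩
    · refine Or.inr ⟨Ne.symm h1, ?_⟩
      rcases h2 with h | ⟨h, h'⟩ | ⟨h, h'⟩
      · exact Or.inl h.symm
      · exact Or.inr (Or.inr ⟨h', h⟩)
      · exact Or.inr (Or.inl ⟨h', h⟩)
  loopless := by
    constructor
    rintro ⟨a, i⟩ (⟨-, h, -⟩ | ⟨h, -⟩) <;> exact h rfl

/-- The ladder-like graph with the edges `u_1 v_1` and `u_4 v_4` deleted. -/
def ladderLikeMinus (m : ℕ) [NeZero m] : SimpleGraph (Bool × Fin m) :=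
  (ladderLike m).deleteEdges
    {s((false, (0 : Fin m)), (true, (0 : Fin m))), s((false, (3 : Fin m)), (true, (3 : Fin m)))}

/-!
Every cycle used here consists of an arc of `Z_1`, an arc of `Z_2`, and two edges joining their
ends. The even length `2t` comes from the rectangle `u_a … u_{a+t-1} v_{a+t-1} … v_a` closed by
two rungs, with `a = 3` if `t ∈ {3, m}` (where `a = 2` would need a deleted rung) and `a = 2`
otherwise. Odd lengths use the edge `u_1 v_4`: it closes `u_1 … u_{t+2} v_{t+2} … v_4` of length
`2t + 1` for `3 ≤ t ≤ m - 2`, as well as `u_1 u_2 v_2 v_3 v_4` and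
`u_3 … u_m u_1 v_4 … v_m v_1 v_2 v_3` of lengths `5` and `2m - 1`. (Indices are the paper's:
`u_i` is `(false, i - 1)`.)
-/

theorem hasCycleOfLength_of_injOn {V : Type*} {G : SimpleGraph V} {n : ℕ} (hn : 3 ≤ n)
    (f : ℕ → V) (hf : Set.InjOn f (Set.Iio n))
    (hadj : ∀ i, i + 1 < n → G.Adj (f i) (f (i + 1))) (hclose : G.Adj (f (n - 1)) (f 0)) :
    HasCycleOfLength G n := by
  obtain ⟨k, rfl⟩ : ∃ k, n = k + 3 := ⟨n - 3, by omega⟩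
  have hsucc (v : Fin (k + 3)) : G.Adj (f v) (f ↑(v + 1)) := by
    rw [Fin.val_add_one]
    split_ifs with hv
    · simpa [hv] using hclose
    · exact hadj v (by have := Fin.val_lt_last hv; omega)
  rw [HasCycleOfLength, ← cycleGraph_isContained_iff (by omega)]
  refine ⟨Hom.toCopy ⟨fun v ↦ f v, fun {u v} huv ↦ ?_⟩
    fun u v h ↦ Fin.ext (hf u.isLt v.isLt h)⟩
  rcases cycleGraph_adj.mp huv with h | h
  · rw [sub_eq_iff_eq_add'.mp h]
    exact (hsucc v).symm
  · rw [sub_eq_iff_eq_add'.mp h]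
    exact hsucc u

open Fin.CommRing

section TwoSidedCycles

variable {m : ℕ} [NeZero m] {G : SimpleGraph (Bool × Fin m)}

theorem adj_add_of_forall_adj_add_one (hside : ∀ x i, G.Adj (x, i) (x, i + 1)) {ε : Fin m}
    (hε : ε = 1 ∨ ε = -1) (x : Bool) (i : Fin m) : G.Adj (x, i) (x, i + ε) := by
  rcases hε with rfl | rfl
  · exact hside x i
  · simpa [sub_eq_add_neg] using (hside x (i - 1)).symm

/-- The cycle `(false, a), (false, a + 1), …, (false, a + s), (true, b), (true, b + ε), …,
(true, b + ε * t)`. -/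
theorem hasCycleOfLength_of_arcs (hside : ∀ x i, G.Adj (x, i) (x, i + 1)) {s t : ℕ}
    (hs : s < m) (ht : t < m) (hst : 1 ≤ s + t) {a b ε : Fin m} (hε : ε = 1 ∨ ε = -1)
    (hab : G.Adj (false, a + s) (true, b)) (hba : G.Adj (true, b + ε * t) (false, a)) :
    HasCycleOfLength G (s + t + 2) := by
  have hinj := CharP.natCast_injOn_Iio (Fin m) m
  have hεε : ε * ε = 1 := by rcases hε with rfl | rfl <;> simp
  let f : ℕ → Bool × Fin m := fun i ↦
    if i ≤ s then (false, a + i) else (true, b + ε * ↑(i - (s + 1)))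
  refine hasCycleOfLength_of_injOn (by omega) f ?_ ?_ ?_
  · intro i hi j hj hij
    simp only [Set.mem_Iio] at hi hj
    simp only [f] at hij
    split_ifs at hij with hi' hj' hj' <;> simp only [Prod.mk.injEq, Bool.false_eq_true,
      Bool.true_eq_false, false_and, true_and, add_right_inj] at hij
    · exact hinj (by simp; omega) (by simp; omega) hij
    · have hcast : ((i - (s + 1) : ℕ) : Fin m) = ((j - (s + 1) : ℕ) : Fin m) := by
        simpa [← mul_assoc, hεε] using congrArg (ε * ·) hij
      have := hinj (by simp; omega) (by simp; omega) hcast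
      omega
  · intro i hi
    simp only [f]
    rcases lt_trichotomy i s with h | rfl | h
    · rw [if_pos h.le, if_pos (Nat.succ_le_of_lt h), Nat.cast_succ, ← add_assoc]
      exact hside false _
    · simpa using hab
    · rw [if_neg (by omega), if_neg (by omega), show i + 1 - (s + 1) = i - (s + 1) + 1 by omega,
        Nat.cast_succ, mul_add_one, ← add_assoc]
      exact adj_add_of_forall_adj_add_one hside hε true _
  · simpa [f, show s + t + 2 - 1 - (s + 1) = t by omega] using hba

theorem hasCycleOfLength_rectangle (hside : ∀ x i, G.Adj (x, i) (x, i + 1)) {t : ℕ}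
    (ht₀ : 1 ≤ t) (ht : t < m) {a : Fin m} (h₁ : G.Adj (false, a) (true, a))
    (h₂ : G.Adj (false, a + t) (true, a + t)) : HasCycleOfLength G (2 * t + 2) := by
  rw [two_mul]
  exact hasCycleOfLength_of_arcs hside ht ht (by omega) (Or.inr rfl) h₂ (by simpa using h₁.symm)

end TwoSidedCycles

theorem CharP.natCast_char_sub {R : Type*} {m : ℕ} [AddGroupWithOne R] [CharP R m] {k : ℕ}
    (hk : k ≤ m) : ((m - k : ℕ) : R) = -k := by
  rw [Nat.cast_sub hk, CharP.cast_eq_zero, zero_sub]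

section LadderLikeMinus

variable {m : ℕ} [NeZero m]

theorem ladderLikeMinus_adj_add_one (hm : 2 ≤ m) (x : Bool) (i : Fin m) :
    (ladderLikeMinus m).Adj (x, i) (x, i + 1) := by
  refine ⟨Or.inl ⟨rfl, by simp; omega, Or.inl rfl⟩, ?_⟩
  cases x <;> simp

theorem ladderLikeMinus_adj_rung (hm : 4 ≤ m) (k : ℕ) (hk : k < m) (h0 : k ≠ 0)
    (h3 : k ≠ 3) :
    (ladderLikeMinus m).Adj (false, (k : Fin m)) (true, k) := by
  have hinj := CharP.natCast_injOn_Iio (Fin m) m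
  have h0' : (k : Fin m) ≠ 0 := by exact_mod_cast hinj.ne (y := 0) hk (by simp; omega) h0
  have h3' : (k : Fin m) ≠ 3 := by exact_mod_cast hinj.ne (y := 3) hk (by simp; omega) h3
  refine ⟨Or.inr ⟨by simp, Or.inl rfl⟩, ?_⟩
  simp [h0', h3']

theorem ladderLikeMinus_adj_cross (hm : 4 ≤ m) :
    (ladderLikeMinus m).Adj (false, 0) (true, 3) := by
  have h03 : (0 : Fin m) ≠ 3 := by
    exact_mod_cast (CharP.natCast_injOn_Iio (Fin m) m).ne (x := 0) (y := 3)
      (by simp; omega) (by simp; omega) (by omega)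
  refine ⟨Or.inr ⟨by simp, Or.inr (Or.inl ⟨rfl, rfl⟩)⟩, ?_⟩
  simp [h03, h03.symm]

theorem ladderLikeMinus_hasCycleOfLength_two_mul (hm : 5 ≤ m) {t : ℕ} (ht₂ : 2 ≤ t)
    (ht : t ≤ m) : HasCycleOfLength (ladderLikeMinus m) (2 * t) := by
  obtain ⟨t, rfl⟩ : ∃ t', t = t' + 1 := ⟨t - 1, by omega⟩
  have hside := ladderLikeMinus_adj_add_one (by omega : 2 ≤ m)
  have rung := ladderLikeMinus_adj_rung (by omega : 4 ≤ m)
  by_cases h : t = 2 ∨ t = m - 1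
  · have h₂ : (ladderLikeMinus m).Adj (false, 2 + t) (true, 2 + t) := by
      rcases h with rfl | rfl
      · exact_mod_cast rung 4 (by omega) (by omega) (by omega)
      · rw [CharP.natCast_char_sub (by omega),
          show (2 : Fin m) + -((1 : ℕ) : Fin m) = 1 by push_cast; ring]
        exact_mod_cast rung 1 (by omega) (by omega) (by omega)
    exact hasCycleOfLength_rectangle hside (by omega) (by omega)
      (by exact_mod_cast rung 2 (by omega) (by omega) (by omega)) h₂
  · exact hasCycleOfLength_rectangle hside (by omega) (by omega) (a := 1)
      (by exact_mod_cast rung 1 (by omega) (by omega) (by omega))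
      (by exact_mod_cast rung (1 + t) (by omega) (by omega) (by omega))

theorem ladderLikeMinus_hasCycleOfLength_five (hm : 4 ≤ m) :
    HasCycleOfLength (ladderLikeMinus m) 5 := by
  refine hasCycleOfLength_of_arcs (s := 1) (t := 2) (a := 0) (b := 1)
    (ladderLikeMinus_adj_add_one (by omega)) (by omega) (by omega) (by omega) (Or.inl rfl) ?_ ?_
  · simpa using ladderLikeMinus_adj_rung hm 1 (by omega) (by omega) (by omega)
  · rw [show (1 : Fin m) + 1 * ((2 : ℕ) : Fin m) = 3 by norm_num]
    exact (ladderLikeMinus_adj_cross hm).symm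

theorem ladderLikeMinus_hasCycleOfLength_two_mul_add_one {t : ℕ} (ht₃ : 3 ≤ t)
    (ht : t + 2 ≤ m) : HasCycleOfLength (ladderLikeMinus m) (2 * t + 1) := by
  obtain ⟨j, rfl⟩ : ∃ j, t = j + 2 := ⟨t - 2, by omega⟩
  rw [show 2 * (j + 2) + 1 = (j + 3) + j + 2 by ring]
  refine hasCycleOfLength_of_arcs (a := 0) (b := ((j + 3 : ℕ) : Fin m))
    (ladderLikeMinus_adj_add_one (by omega)) (by omega) (by omega) (by omega) (Or.inr rfl) ?_ ?_
  · simpa using ladderLikeMinus_adj_rung (by omega) (j + 3) (by omega) (by omega) (by omega)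
  · rw [show ((j + 3 : ℕ) : Fin m) + -1 * j = 3 by push_cast; ring]
    exact (ladderLikeMinus_adj_cross (by omega)).symm

theorem ladderLikeMinus_hasCycleOfLength_two_mul_sub_one (hm : 4 ≤ m) :
    HasCycleOfLength (ladderLikeMinus m) (2 * m - 1) := by
  rw [show 2 * m - 1 = (m - 2) + (m - 1) + 2 by omega]
  refine hasCycleOfLength_of_arcs (a := 2) (b := 3)
    (ladderLikeMinus_adj_add_one (by omega)) (by omega) (by omega) (by omega) (Or.inl rfl) ?_ ?_
  · rw [CharP.natCast_char_sub (by omega),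
      show (2 : Fin m) + -((2 : ℕ) : Fin m) = 0 by push_cast; ring]
    exact ladderLikeMinus_adj_cross hm
  · rw [CharP.natCast_char_sub (by omega),
      show (3 : Fin m) + 1 * -((1 : ℕ) : Fin m) = 2 by push_cast; ring]
    exact_mod_cast (ladderLikeMinus_adj_rung hm 2 (by omega) (by omega) (by omega)).symm

end LadderLikeMinus

theorem ladderLikeMinus_pancyclic (m : ℕ) [NeZero m] (hm : 6 ≤ m) :
    ∀ ℓ : ℕ, 4 ≤ ℓ → ℓ ≤ 2 * m → HasCycleOfLength (ladderLikeMinus m) ℓ := by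
  intro ℓ hℓ₄ hℓ
  obtain ⟨t, rfl | rfl⟩ := Nat.even_or_odd' ℓ
  · exact ladderLikeMinus_hasCycleOfLength_two_mul (by omega) (by omega) (by omega)
  · obtain rfl | rfl | ⟨ht₃, ht⟩ : t = 2 ∨ t = m - 1 ∨ (3 ≤ t ∧ t + 2 ≤ m) := by omega
    · exact ladderLikeMinus_hasCycleOfLength_five (by omega)
    · rw [show 2 * (m - 1) + 1 = 2 * m - 1 by omega]
      exact ladderLikeMinus_hasCycleOfLength_two_mul_sub_one (by omega)
    · exact ladderLikeMinus_hasCycleOfLength_two_mul_add_one ht₃ ht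
end

section
/- Every ladder-like graph on 2m vertices with m ≥ 6 is 3-connected and 4-pancyclic. -/
open SimpleGraph

/-!
Write `u_1, …, u_m` and `v_1, …, v_m` for the two sides. If at most two vertices are deleted,
either a side is untouched, or each side loses one vertex, say `u_b` and some `v_c`; then `v_{b-1}`
or `v_{b+1}` survives, as they differ when `m ≥ 3`. What is left of the chosen side is a path,
and every surviving vertex joins it through its rung, or through a surviving `v_{b±1}` and the
rung of that vertex.

Every cycle consists of a path on each side and two cross edges: `u_1 … u_k v_k … v_1` has
length `2k` for `2 ≤ k ≤ m`, `u_1 v_4 … v_{a+4} u_{a+4} … u_2` has length `2a + 5` for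
`a + 4 ≤ m`, and `u_2 … u_m u_1 v_4 … v_m v_1 v_2` has length `2m - 1`.
-/

open Fin.NatCast Fin.CommRing

namespace SimpleGraph

variable {V : Type*} {G : SimpleGraph V}

lemma induce_connected_of_forall_walk {s : Set V} {u : V} (hu : u ∈ s)
    (h : ∀ v ∈ s, ∃ p : G.Walk u v, ∀ x ∈ p.support, x ∈ s) : (G.induce s).Connected :=
  G.induce_connected_of_patches u hu fun hv =>
    let ⟨p, hp⟩ := h _ hv
    ⟨_, hp, p.start_mem_support, p.end_mem_support, p.connected_induce_support.preconnected _ _⟩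

end SimpleGraph

lemma hasCycleOfLength_of_disjoint_paths {V : Type*} {G : SimpleGraph V} {a b c d : V}
    {p : G.Walk a b} {q : G.Walk c d} (hp : p.IsPath) (hq : q.IsPath)
    (hpq : p.support.Disjoint q.support) (hbc : G.Adj b c) (hda : G.Adj d a)
    (hlen : 0 < p.length + q.length) :
    HasCycleOfLength G (p.length + q.length + 2) := by
  have ha : a ∉ q.support := fun h => hpq p.start_mem_support h
  have hd : d ∉ p.support := fun h => hpq h q.end_mem_support
  refine ⟨d, .cons hda (p.append (.cons hbc q)), ?_,
    by simp only [Walk.length_cons, Walk.length_append]; omega⟩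
  rw [Walk.cons_isCycle_iff, Walk.isPath_def, Walk.support_append, Walk.support_cons,
    List.tail_cons, Walk.edges_append, Walk.edges_cons]
  refine ⟨hp.support_nodup.append hq.support_nodup hpq, ?_⟩
  simp only [List.mem_append, List.mem_cons, Sym2.eq_iff, not_or]
  refine ⟨fun h => hd (p.fst_mem_support_of_mem_edges h), ⟨?_, ?_⟩,
    fun h => ha (q.snd_mem_support_of_mem_edges h)⟩
  · rintro ⟨rfl, rfl⟩
    exact ha q.start_mem_support
  · rintro ⟨rfl, rfl⟩
    rw [Walk.isPath_iff_nil, ← Walk.length_eq_zero_iff] at hp hq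
    omega

section LadderLike

variable {m : ℕ} [NeZero m]

lemma Fin.natCast_ne_zero_of_pos_of_lt {a : ℕ} (h0 : 0 < a) (h : a < m) : (a : Fin m) ≠ 0 :=
  fun h' => absurd (Nat.le_of_dvd h0 (Fin.natCast_eq_zero.mp h')) (by omega)

lemma ladderLike_adj_succ (hm : 2 ≤ m) (s : Bool) (i : Fin m) :
    (ladderLike m).Adj (s, i) (s, i + 1) := by
  refine Or.inl ⟨rfl, fun h => Fin.natCast_ne_zero_of_pos_of_lt one_pos hm ?_, Or.inl rfl⟩
  rw [Nat.cast_one]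
  exact add_eq_left.mp h.symm

lemma ladderLike_adj_rung {s t : Bool} (hst : s ≠ t) {i j : Fin m} (hij : i = j) :
    (ladderLike m).Adj (s, i) (t, j) :=
  Or.inr ⟨hst, Or.inl hij⟩

lemma ladderLike_adj_zero_three {s t : Bool} (hst : s ≠ t) {i j : Fin m} (hi : i = 0)
    (hj : j = 3) : (ladderLike m).Adj (s, i) (t, j) :=
  Or.inr ⟨hst, Or.inr (Or.inl ⟨hi, hj⟩)⟩

lemma ladderLike_exists_sidePath (s : Bool) (i : Fin m) (k : ℕ) (hk : k < m) {j : Fin m}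
    (hj : i + k = j) :
    ∃ p : (ladderLike m).Walk (s, i) (s, j),
      p.IsPath ∧ p.length = k ∧ ∀ x ∈ p.support, x.1 = s ∧ ∃ l ≤ k, x.2 = i + l := by
  subst hj
  induction k with
  | zero =>
    rw [Nat.cast_zero, add_zero]
    exact ⟨.nil, .nil, rfl, fun x hx => by simp_all⟩
  | succ k ih =>
    obtain ⟨p, hp, hlen, hsupp⟩ := ih (by omega)
    have hstep : (ladderLike m).Adj (s, i + k) (s, i + (k + 1 : ℕ)) := by
      rw [Nat.cast_succ, ← add_assoc]
      exact ladderLike_adj_succ (by omega) s _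
    refine ⟨p.concat hstep, hp.concat (fun hmem => ?_) hstep, by simp [hlen], ?_⟩
    · obtain ⟨-, l, hl, hx⟩ := hsupp _ hmem
      have := congrArg Fin.val (add_left_cancel hx)
      rw [Fin.val_cast_of_lt hk, Fin.val_cast_of_lt (by omega)] at this
      omega
    · simp only [Walk.support_concat, List.mem_append, List.mem_singleton]
      rintro x (hx | rfl)
      · obtain ⟨hs, l, hl, hx⟩ := hsupp x hx
        exact ⟨hs, l, by omega, hx⟩
      · exact ⟨rfl, k + 1, le_rfl, rfl⟩

lemma ladderLike_induce_connected_of_side (hm : 2 ≤ m) {S : Set (Bool × Fin m)} (s : Bool)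
    (b : Fin m) (hside : ∀ i ≠ b, (s, i) ∉ S)
    (hb : (s, b) ∈ S → ∃ j, (!s, j) ∉ S ∧ (ladderLike m).Adj (!s, j) (!s, b)) :
    ((ladderLike m).induce Sᶜ).Connected := by
  have hanchor : (s, b + 1) ∈ Sᶜ :=
    hside _ fun h => (ladderLike_adj_succ hm s b).ne (by rw [h])
  have side_walk : ∀ i, (s, i) ∉ S →
      ∃ p : (ladderLike m).Walk (s, b + 1) (s, i), ∀ x ∈ p.support, x ∈ Sᶜ := by
    intro i hi
    obtain ⟨p, -, -, hp⟩ := ladderLike_exists_sidePath s (b + 1) (i - (b + 1)).val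
      (i - (b + 1)).isLt (by rw [Fin.cast_val_eq_self, add_sub_cancel])
    refine ⟨p, fun x hx => ?_⟩
    obtain ⟨hs, l, hl, hx2⟩ := hp x hx
    obtain rfl : x = (s, b + 1 + l) := Prod.ext hs hx2
    rcases hl.lt_or_eq with hl | rfl
    · refine hside _ fun h => Fin.natCast_ne_zero_of_pos_of_lt l.succ_pos (by omega : l + 1 < m) ?_
      rw [Nat.cast_succ, add_comm, ← add_eq_left (a := b), ← add_assoc, h]
    · rwa [Fin.cast_val_eq_self, add_sub_cancel]
  refine induce_connected_of_forall_walk hanchor fun ⟨t, i⟩ hv => ?_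
  by_cases ht : t = s
  · subst ht
    exact side_walk i hv
  obtain rfl : t = !s := by revert ht; cases t <;> cases s <;> decide
  by_cases hsi : (s, i) ∈ S
  · obtain rfl : i = b := by_contra fun h => hside i h hsi
    obtain ⟨j, hj, hjb⟩ := hb hsi
    obtain ⟨p, hp⟩ := side_walk j (hside j fun h => hjb.ne (by rw [h]))
    refine ⟨(p.concat (ladderLike_adj_rung (by simp) rfl)).concat hjb, fun x hx => ?_⟩
    simp only [Walk.support_concat, List.mem_append, List.mem_singleton] at hx
    rcases hx with (hx | rfl) | rfl
    exacts [hp x hx, hj, hv]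
  · obtain ⟨p, hp⟩ := side_walk i hsi
    refine ⟨p.concat (ladderLike_adj_rung (by simp) rfl), fun x hx => ?_⟩
    simp only [Walk.support_concat, List.mem_append, List.mem_singleton] at hx
    rcases hx with hx | rfl
    exacts [hp x hx, hv]

lemma ladderLike_isKConnected_three (hm : 3 ≤ m) : IsKConnected (ladderLike m) 3 := by
  have hm2 : 2 ≤ m := by omega
  refine ⟨by simp only [Nat.card_eq_fintype_card, Fintype.card_prod, Fintype.card_bool,
    Fintype.card_fin]; omega, fun S hS => ?_⟩
  have not_three :
      ∀ x y z, x ∈ S → y ∈ S → z ∈ S → x ≠ y → x ≠ z → y ≠ z → False :=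
    fun x y z hx hy hz hxy hxz hyz =>
      absurd ((Set.two_lt_ncard_iff).mpr ⟨x, y, z, hx, hy, hz, hxy, hxz, hyz⟩) (by omega)
  by_cases hfree : ∃ t, ∀ i, (t, i) ∉ S
  · obtain ⟨t, ht⟩ := hfree
    exact ladderLike_induce_connected_of_side hm2 t 0 (fun i _ => ht i)
      fun h => absurd h (ht 0)
  push Not at hfree
  obtain ⟨i, hi⟩ := hfree false
  obtain ⟨j, hj⟩ := hfree true
  refine ladderLike_induce_connected_of_side hm2 false i
    (fun i' hi' h => not_three _ _ _ hi h hj (by simpa using hi'.symm) (by simp) (by simp))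
    fun _ => ?_
  by_cases hsucc : (true, i + 1) ∈ S
  · refine ⟨i - 1, fun hpred => not_three _ _ _ hi hsucc hpred (by simp) (by simp) ?_,
      by simpa only [sub_add_cancel, Bool.not_false] using ladderLike_adj_succ hm2 true (i - 1)⟩
    refine fun h => Fin.natCast_ne_zero_of_pos_of_lt two_pos hm ?_
    push_cast
    linear_combination congrArg Prod.snd h
  · exact ⟨i + 1, hsucc, (ladderLike_adj_succ hm2 true i).symm⟩

lemma ladderLike_hasCycleOfLength_of_sidePaths {i i' j j' : Fin m}
    {p : (ladderLike m).Walk (false, i) (false, i')} {q : (ladderLike m).Walk (true, j) (true, j')}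
    (hp : p.IsPath) (hq : q.IsPath) (hps : ∀ x ∈ p.support, x.1 = false)
    (hqs : ∀ x ∈ q.support, x.1 = true) (hi'j : (ladderLike m).Adj (false, i') (true, j))
    (hj'i : (ladderLike m).Adj (true, j') (false, i)) (hlen : 0 < p.length + q.length) :
    HasCycleOfLength (ladderLike m) (p.length + q.length + 2) :=
  hasCycleOfLength_of_disjoint_paths hp hq
    (fun x hxp hxq => Bool.false_ne_true ((hps x hxp).symm.trans (hqs x hxq))) hi'j hj'i hlen

lemma ladderLike_hasCycleOfLength_two_mul {k : ℕ} (hk : 2 ≤ k) (hkm : k ≤ m) :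
    HasCycleOfLength (ladderLike m) (2 * k) := by
  obtain ⟨p, hp, hpl, hps⟩ :=
    ladderLike_exists_sidePath false (0 : Fin m) (k - 1) (by omega) rfl
  obtain ⟨q, hq, hql, hqs⟩ :=
    ladderLike_exists_sidePath true (0 : Fin m) (k - 1) (by omega) rfl
  have := ladderLike_hasCycleOfLength_of_sidePaths hp hq.reverse (fun x hx => (hps x hx).1)
    (fun x hx => (hqs x (by simpa using hx)).1) (ladderLike_adj_rung (by decide) rfl)
    (ladderLike_adj_rung (by decide) rfl) (by rw [Walk.length_reverse]; omega)
  rwa [Walk.length_reverse, hpl, hql, show k - 1 + (k - 1) + 2 = 2 * k by omega] at this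

lemma ladderLike_hasCycleOfLength_two_mul_add_five {a : ℕ} (ha : a + 3 < m) :
    HasCycleOfLength (ladderLike m) (2 * a + 5) := by
  obtain ⟨p, hp, hpl, hps⟩ := ladderLike_exists_sidePath false (0 : Fin m) (a + 3) ha rfl
  obtain ⟨q, hq, hql, hqs⟩ := ladderLike_exists_sidePath true (3 : Fin m) a (by omega) rfl
  have := ladderLike_hasCycleOfLength_of_sidePaths hp.reverse hq
    (fun x hx => (hps x (by simpa using hx)).1) (fun x hx => (hqs x hx).1)
    (ladderLike_adj_zero_three (by decide) rfl rfl)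
    (ladderLike_adj_rung (by decide) (by push_cast; ring)) (by rw [Walk.length_reverse]; omega)
  rwa [Walk.length_reverse, hpl, hql, show a + 3 + a + 2 = 2 * a + 5 by omega] at this

lemma ladderLike_hasCycleOfLength_two_mul_sub_one (hm : 2 ≤ m) :
    HasCycleOfLength (ladderLike m) (2 * m - 1) := by
  have hcast : ∀ k ≤ m, ((m - k : ℕ) : Fin m) = -k := fun k hk => by
    rw [Nat.cast_sub hk, CharP.cast_eq_zero, zero_sub]
  obtain ⟨p, hp, hpl, hps⟩ :=
    ladderLike_exists_sidePath false (1 : Fin m) (m - 1) (by omega) rfl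
  obtain ⟨q, hq, hql, hqs⟩ :=
    ladderLike_exists_sidePath true (3 : Fin m) (m - 2) (by omega) rfl
  have := ladderLike_hasCycleOfLength_of_sidePaths hp hq
    (fun x hx => (hps x hx).1) (fun x hx => (hqs x hx).1)
    (ladderLike_adj_zero_three (by decide) (by rw [hcast 1 (by omega)]; ring) rfl)
    (ladderLike_adj_rung (by decide) (by rw [hcast 2 hm]; push_cast; ring)) (by omega)
  rwa [hpl, hql, show m - 1 + (m - 2) + 2 = 2 * m - 1 by omega] at this

end LadderLike

theorem ladderLike_threeConnected_pancyclic (m : ℕ) [NeZero m] (hm : 6 ≤ m) :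
    IsKConnected (ladderLike m) 3 ∧
      ∀ ℓ : ℕ, 4 ≤ ℓ → ℓ ≤ 2 * m → HasCycleOfLength (ladderLike m) ℓ := by
  refine ⟨ladderLike_isKConnected_three (by omega), fun ℓ hℓ hℓm => ?_⟩
  obtain ⟨k, rfl | rfl⟩ := Nat.even_or_odd' ℓ
  · exact ladderLike_hasCycleOfLength_two_mul (by omega) (by omega)
  by_cases hlong : 2 * k + 1 = 2 * m - 1
  · rw [hlong]
    exact ladderLike_hasCycleOfLength_two_mul_sub_one (by omega)
  · obtain ⟨a, rfl⟩ : ∃ a, k = a + 2 := ⟨k - 2, by omega⟩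
    rw [show 2 * (a + 2) + 1 = 2 * a + 5 by ring]
    exact ladderLike_hasCycleOfLength_two_mul_add_five (by omega)
end

section
/- For n ≥ 4, the augmented cube AQ_n contains a spanning subgraph isomorphic to a ladder-like graph on 2^n vertices. -/
/-!
A Hamiltonian path `c₀, …, c_{m-1}` of a graph `G` yields a Hamiltonian cycle of the prism
`K₂ □ G` running forwards along one copy and back along the other:
`(1, c₁), (1, c₀), (0, c₀), (0, c₁), …, (0, c_{m-1}), (1, c_{m-1}), …, (1, c₂)`.
Sending `(0, x)` to `0x` and `(1, x)` to `1x̄` embeds `K₂ □ AQ_k` in `AQ_{k+1}`, since the rungs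
become complementary edges. By induction every `AQ_k` has a Hamiltonian path, hence `AQ_{k+1}`
has a Hamiltonian cycle `z₀, …, z_{M-1}` with `z₃ = z̄₀` (the images of `(1, c₁)` and `(0, c₁)`).
In `AQ_{k+2}` the cycles `0z` and `1z̄` with rungs `0zᵢ ~ 1z̄ᵢ` then form the ladder-like graph:
its extra edges `0z₀ ~ 1z̄₃ = 1z₀` and `0z₃ ~ 1z̄₀ = 1z₃` are hypercube edges.
-/

open SimpleGraph

/-- The `n`-dimensional augmented cube: vertices are binary strings of length `n`;
two strings are adjacent iff (unwinding the recursive definition) they agree on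
a prefix, and then either differ in exactly one coordinate or are bitwise
complementary on the whole remaining suffix. -/
def AQ (n : ℕ) : SimpleGraph (Fin n → Bool) where
  Adj x y := ∃ i : Fin n, (∀ j, j < i → x j = y j) ∧
    ((x i ≠ y i ∧ ∀ j, i < j → x j = y j) ∨ (∀ j, i ≤ j → x j ≠ y j))
  symm := by
    constructor
    rintro x y ⟨i, h1, h2⟩
    refine ⟨i, fun j hj => (h1 j hj).symm, ?_⟩
    rcases h2 with ⟨ha, hb⟩ | h
    · exact Or.inl ⟨Ne.symm ha, fun j hj => (hb j hj).symm⟩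
    · exact Or.inr fun j hj => Ne.symm (h j hj)
  loopless := by
    constructor
    rintro x ⟨i, -, ⟨ha, -⟩ | h⟩
    · exact ha rfl
    · exact h i le_rfl rfl

variable {V W : Type*}

theorem SimpleGraph.Hom.exists_le_iso_of_bijective {G : SimpleGraph V} {H : SimpleGraph W}
    (f : G →g H) (hf : Function.Bijective f) : ∃ H' ≤ H, Nonempty (G ≃g H') :=
  let e := Equiv.ofBijective f hf
  ⟨G.map e.toEmbedding, (map_le_iff_le_comap _ _ _).mpr fun _ _ h => f.map_adj h, ⟨Iso.map e G⟩⟩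

-- A Hamiltonian path (cycle) of `G`, recorded as the order `c : Fin m ≃ V` in which it visits
-- the vertices; for `m = 2` the "cycle" is a single edge traversed twice.
def IsHamiltonianPathOrder (G : SimpleGraph V) {m : ℕ} (c : Fin m ≃ V) : Prop :=
  ∀ ⦃i j⦄, (pathGraph m).Adj i j → G.Adj (c i) (c j)

def IsHamiltonianCycleOrder (G : SimpleGraph V) {m : ℕ} [NeZero m] (c : Fin m ≃ V) : Prop :=
  ∀ i, G.Adj (c i) (c (i + 1))

namespace IsHamiltonianCycleOrder

variable {G : SimpleGraph V} {m : ℕ} [NeZero m] {c : Fin m ≃ V}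

theorem isHamiltonianPathOrder (hc : IsHamiltonianCycleOrder G c) :
    IsHamiltonianPathOrder G c := by
  have hsucc {i j : Fin m} (h : i.val + 1 = j.val) : G.Adj (c i) (c j) := by
    convert hc i
    exact Fin.ext (by rw [Fin.val_add_one_of_lt' (h ▸ j.isLt), h])
  intro i j hij
  rcases pathGraph_adj.mp hij with h | h
  · exact hsucc h
  · exact (hsucc h).symm

theorem addRight (hc : IsHamiltonianCycleOrder G c) (s : Fin m) :
    IsHamiltonianCycleOrder G ((Equiv.addRight s).trans c) := fun i => by
  simpa only [Equiv.trans_apply, Equiv.coe_addRight, add_right_comm] using hc (i + s)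

end IsHamiltonianCycleOrder

-- The boustrophedon order on `Bool × Fin m`: forwards along `false`, then back along `true`.
def snake {n m : ℕ} (hn : n = 2 * m) : Fin n ≃ Bool × Fin m where
  toFun i := if h : (i : ℕ) < m then (false, ⟨i, h⟩) else (true, ⟨n - 1 - i, by omega⟩)
  invFun p := bif p.1 then ⟨n - 1 - p.2, by omega⟩ else ⟨p.2, by omega⟩
  left_inv i := by
    by_cases h : (i : ℕ) < m
    · simp [h]
    · ext
      simp only [h, ↓reduceDIte, cond_true]
      omega
  right_inv := by
    rintro ⟨_ | _, j⟩
    · simp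
    · simp only [cond_true]
      rw [dif_neg (by omega)]
      simp only [Prod.mk.injEq, Fin.ext_iff, true_and]
      omega

theorem snake_adj_snake_add_one {n m : ℕ} [NeZero n] (hn : n = 2 * m) (i : Fin n) :
    ((⊤ : SimpleGraph Bool) □ pathGraph m).Adj (snake hn i) (snake hn (i + 1)) := by
  obtain ⟨j, hj⟩ : ∃ j, i + 1 = j := ⟨_, rfl⟩
  have hval : (j : ℕ) = if (i : ℕ) + 1 = n then 0 else (i : ℕ) + 1 := by
    rw [← hj, Fin.val_add, Fin.val_one', Nat.add_mod_mod]
    split_ifs with h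
    · rw [h, Nat.mod_self]
    · exact Nat.mod_eq_of_lt (by omega)
  rw [hj]
  simp only [snake, Equiv.coe_fn_mk, boxProd_adj, top_adj, pathGraph_adj]
  split_ifs at hval ⊢ <;>
    simp only [Fin.mk.injEq, ne_eq, Bool.false_eq_true, Bool.true_eq_false, not_true_eq_false,
      not_false_eq_true, true_and, false_and, and_true, and_false, false_or, or_false] <;> omega

theorem exists_snake_eq_true_and_snake_add_three_eq_false {n m : ℕ} [NeZero n]
    (hn : n = 2 * m) (hm : 2 ≤ m) :
    ∃ s : Fin n, snake hn s = (true, ⟨1, hm⟩) ∧ snake hn (s + 3) = (false, ⟨1, hm⟩) := by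
  have h3 : (⟨n - 2, by omega⟩ + 3 : Fin n) = ⟨1, by omega⟩ := by
    ext
    rw [Fin.val_add, Fin.coe_ofNat_eq_mod, Nat.add_mod_mod, show n - 2 + 3 = 1 + n by omega,
      Nat.add_mod_right, Nat.mod_eq_of_lt (by omega)]
  refine ⟨⟨n - 2, by omega⟩, ?_, ?_⟩
  · simp only [snake, Equiv.coe_fn_mk]
    rw [dif_neg (by omega)]
    simp only [Prod.mk.injEq, Fin.mk.injEq, true_and]
    omega
  · simp only [snake, Equiv.coe_fn_mk, h3]
    rw [dif_pos (by omega)]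

theorem IsHamiltonianPathOrder.isHamiltonianCycleOrder_snake {G : SimpleGraph V} {m : ℕ}
    {c : Fin m ≃ V} (hc : IsHamiltonianPathOrder G c) {n : ℕ} [NeZero n] (hn : n = 2 * m) :
    IsHamiltonianCycleOrder ((⊤ : SimpleGraph Bool) □ G)
      ((snake hn).trans ((Equiv.refl Bool).prodCongr c)) := by
  intro i
  rcases snake_adj_snake_add_one hn i with ⟨hb, he⟩ | ⟨hp, he⟩
  · exact Or.inl ⟨hb, congrArg c he⟩
  · exact Or.inr ⟨hc hp, he⟩

namespace AQ

-- The recursive definition of the augmented cube.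
theorem cons_adj_cons_iff {k : ℕ} {a b : Bool} {x y : Fin k → Bool} :
    (AQ (k + 1)).Adj (Fin.cons a x) (Fin.cons b y) ↔
      a = b ∧ (AQ k).Adj x y ∨ a ≠ b ∧ (x = y ∨ x = yᶜ) := by
  have hcompl : x = yᶜ ↔ ∀ i, x i ≠ y i := by
    simp only [funext_iff, Pi.compl_apply, Bool.compl_eq_bnot, ne_eq, Bool.eq_not_iff]
  rw [funext_iff, hcompl]
  simp only [AQ, Fin.exists_fin_succ, Fin.forall_fin_succ, Fin.cons_zero, Fin.cons_succ,
    Fin.succ_lt_succ_iff, Fin.succ_le_succ_iff, Fin.succ_pos, Fin.succ_ne_zero, Fin.not_lt_zero,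
    Fin.zero_le, lt_self_iff_false, nonpos_iff_eq_zero, ne_eq, IsEmpty.forall_iff, implies_true,
    forall_const, true_and, and_assoc, ← and_or_left, exists_and_left]
  exact or_comm

theorem compl_adj_compl_iff {k : ℕ} {x y : Fin k → Bool} :
    (AQ k).Adj xᶜ yᶜ ↔ (AQ k).Adj x y := by
  simp only [AQ, Pi.compl_apply, ne_eq, compl_inj_iff]

end AQ

def twistedCons (k : ℕ) : Bool × (Fin k → Bool) ≃ (Fin (k + 1) → Bool) where
  toFun p := Fin.cons p.1 (bif p.1 then p.2ᶜ else p.2)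
  invFun w := (w 0, bif w 0 then (Fin.tail w)ᶜ else Fin.tail w)
  left_inv := by rintro ⟨_ | _, x⟩ <;> simp
  right_inv w := by
    obtain ⟨b, x, rfl⟩ : ∃ b x, w = Fin.cons b x := ⟨_, _, (Fin.cons_self_tail w).symm⟩
    cases b <;> simp

theorem twistedCons_not (k : ℕ) (b : Bool) (x : Fin k → Bool) :
    twistedCons k (!b, x) = (twistedCons k (b, x))ᶜ := by
  funext j
  cases j using Fin.cases <;> cases b <;> simp [twistedCons]

namespace AQ

theorem twistedCons_adj_twistedCons_iff {k : ℕ} {p q : Bool × (Fin k → Bool)} :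
    (AQ (k + 1)).Adj (twistedCons k p) (twistedCons k q) ↔
      p.1 = q.1 ∧ (AQ k).Adj p.2 q.2 ∨ p.1 ≠ q.1 ∧ (p.2 = q.2 ∨ p.2 = q.2ᶜ) := by
  rcases p with ⟨_ | _, x⟩ <;> rcases q with ⟨_ | _, y⟩ <;>
    simp [twistedCons, cons_adj_cons_iff, compl_adj_compl_iff, or_comm, eq_comm, eq_compl_comm]

theorem adj_twistedCons_of_boxProd_adj {k : ℕ} {p q : Bool × (Fin k → Bool)}
    (h : ((⊤ : SimpleGraph Bool) □ AQ k).Adj p q) :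
    (AQ (k + 1)).Adj (twistedCons k p) (twistedCons k q) := by
  rw [twistedCons_adj_twistedCons_iff]
  rcases h with ⟨hb, hx⟩ | ⟨hx, hb⟩
  · exact Or.inr ⟨hb, Or.inl hx⟩
  · exact Or.inl ⟨hb, hx⟩

theorem isHamiltonianCycleOrder_twistedCons_snake {k m n : ℕ} [NeZero n] (hn : n = 2 * m)
    {c : Fin m ≃ (Fin k → Bool)} (hc : IsHamiltonianPathOrder (AQ k) c) :
    IsHamiltonianCycleOrder (AQ (k + 1))
      (((snake hn).trans ((Equiv.refl Bool).prodCongr c)).trans (twistedCons k)) :=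
  fun i => adj_twistedCons_of_boxProd_adj (hc.isHamiltonianCycleOrder_snake hn i)

theorem exists_isHamiltonianPathOrder (k : ℕ) :
    ∃ c : Fin (2 ^ k) ≃ (Fin k → Bool), IsHamiltonianPathOrder (AQ k) c := by
  induction k with
  | zero =>
    exact ⟨Equiv.ofUnique (Fin 1) _, fun i j h => (h.ne (Subsingleton.elim (α := Fin 1) i j)).elim⟩
  | succ k ih =>
    obtain ⟨c, hc⟩ := ih
    exact ⟨_,
      (isHamiltonianCycleOrder_twistedCons_snake (pow_succ' 2 k) hc).isHamiltonianPathOrder⟩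

theorem exists_isHamiltonianCycleOrder_apply_three_eq_compl {k m n : ℕ} [NeZero n]
    (hn : n = 2 * m) (hm : 2 ≤ m) {c : Fin m ≃ (Fin k → Bool)}
    (hc : IsHamiltonianPathOrder (AQ k) c) :
    ∃ z : Fin n ≃ (Fin (k + 1) → Bool), IsHamiltonianCycleOrder (AQ (k + 1)) z ∧ z 3 = (z 0)ᶜ := by
  obtain ⟨s, hs, hs3⟩ := exists_snake_eq_true_and_snake_add_three_eq_false hn hm
  refine ⟨_, (isHamiltonianCycleOrder_twistedCons_snake hn hc).addRight s, ?_⟩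
  simp [add_comm, hs, hs3, ← twistedCons_not]

theorem exists_bijective_ladderLike_hom {k M : ℕ} [NeZero M] {z : Fin M ≃ (Fin k → Bool)}
    (hz : IsHamiltonianCycleOrder (AQ k) z) (h03 : z 3 = (z 0)ᶜ) :
    ∃ f : ladderLike M →g AQ (k + 1), Function.Bijective f := by
  let e := ((Equiv.refl Bool).prodCongr z).trans (twistedCons k)
  have he (b : Bool) (i : Fin M) : e (b, i) = twistedCons k (b, z i) := rfl
  refine ⟨⟨e, ?_⟩, e.bijective⟩
  rintro ⟨a, i⟩ ⟨b, j⟩ (⟨hab, -, hij⟩ | ⟨hab, rfl | ⟨rfl, rfl⟩ | ⟨rfl, rfl⟩⟩) <;>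
    rw [he, he, twistedCons_adj_twistedCons_iff]
  · rcases hij with rfl | rfl
    · exact Or.inl ⟨hab, hz i⟩
    · exact Or.inl ⟨hab, (hz j).symm⟩
  · exact Or.inr ⟨hab, Or.inl rfl⟩
  · exact Or.inr ⟨hab, Or.inr (eq_compl_comm.mp h03)⟩
  · exact Or.inr ⟨hab, Or.inr h03⟩

end AQ

theorem AQ_spanning_ladderLike (n : ℕ) (hn : 4 ≤ n) :
    ∃ H : SimpleGraph (Fin n → Bool), H ≤ AQ n ∧
      Nonempty (ladderLike (2 ^ (n - 1)) ≃g H) := by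
  obtain ⟨k, rfl⟩ : ∃ k, n = k + 2 := ⟨n - 2, by omega⟩
  obtain ⟨c, hc⟩ := AQ.exists_isHamiltonianPathOrder k
  obtain ⟨z, hz, h03⟩ :=
    AQ.exists_isHamiltonianCycleOrder_apply_three_eq_compl (pow_succ' 2 k)
      (Nat.le_self_pow (by omega) 2) hc
  obtain ⟨f, hf⟩ := AQ.exists_bijective_ladderLike_hom hz h03
  exact f.exists_le_iso_of_bijective hf
end

section
/- Let m ≥ 6 and let L be a ladder-like graph on 2m vertices. Then L contains a cycle of length 2m − 1 (a cycle missing exactly one vertex) and a Hamiltonian cycle. -/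
open SimpleGraph

/-!
Both cycles are explicit. The prism part alone has the Hamiltonian cycle `v_1 … v_m u_m … u_1`
(two rungs joining the two paths), and the extra edge `v_4 u_1` lets one skip `u_2` in
`v_1 v_2 v_3 u_3 … u_m v_m … v_4 u_1`, a cycle of length `2m - 1`. A cyclic sequence of distinct,
consecutively adjacent vertices is a copy of `cycleGraph n`, hence yields a cycle of length `n`.
-/

open Fin.NatCast

namespace SimpleGraph

variable {V : Type*} {G : SimpleGraph V}

theorem cycleGraph_isContained_of_injOn {n : ℕ} {f : ℕ → V} (hf : Set.InjOn f (Set.Iio n))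
    (hadj : ∀ i, i + 1 < n → G.Adj (f i) (f (i + 1))) (hclose : G.Adj (f (n - 1)) (f 0)) :
    cycleGraph n ⊑ G := by
  have adj_of_sub_eq_one {a b : Fin n} (h : (b - a).val = 1) : G.Adj (f a) (f b) := by
    rcases le_or_gt a b with hab | hba
    · rw [Fin.coe_sub_iff_le.mpr hab] at h
      simpa [show b.val = a.val + 1 by omega] using hadj a (by omega)
    · rw [Fin.coe_sub_iff_lt.mpr hba] at h
      simpa [show a.val = n - 1 by omega, show b.val = 0 by omega] using hclose
  refine ⟨⟨⟨fun i => f i, fun {a b} hab => ?_⟩, fun a b hab => Fin.ext (hf a.isLt b.isLt hab)⟩⟩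
  rcases cycleGraph_adj'.mp hab with h | h
  · exact (adj_of_sub_eq_one h).symm
  · exact adj_of_sub_eq_one h

end SimpleGraph

namespace ladderLike

variable {m : ℕ} [NeZero m]

theorem adj_of_val {b b' : Bool} {i j : Fin m}
    (h : b = b' ∧ (j.val = i.val + 1 ∨ i.val = j.val + 1) ∨
      b ≠ b' ∧ (i.val = j.val ∨ i.val = 0 ∧ j.val = 3 ∨ i.val = 3 ∧ j.val = 0)) :
    (ladderLike m).Adj (b, i) (b', j) := by
  dsimp only [ladderLike]
  have val_three {k : Fin m} (hk : k.val = 3) : k = 3 :=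
    Fin.ext <| by simp [hk, Nat.mod_eq_of_lt (hk ▸ k.isLt)]
  rcases h with ⟨hb, h⟩ | ⟨hb, h⟩
  · refine Or.inl ⟨hb, Fin.ne_of_val_ne (by omega), ?_⟩
    rcases h with h | h
    · exact Or.inl (Fin.ext (by rw [Fin.val_add_one_of_lt' (by omega)]; exact h))
    · exact Or.inr (Fin.ext (by rw [Fin.val_add_one_of_lt' (by omega)]; exact h))
  · refine Or.inr ⟨hb, ?_⟩
    rcases h with h | ⟨h₀, h₃⟩ | ⟨h₃, h₀⟩
    · exact Or.inl (Fin.ext h)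
    · exact Or.inr (Or.inl ⟨Fin.ext h₀, val_three h₃⟩)
    · exact Or.inr (Or.inr ⟨val_three h₃, Fin.ext h₀⟩)

variable (m) in
def hamiltonianSeq (i : ℕ) : Bool × Fin m :=
  if i < m then (true, i) else (false, (2 * m - 1 - i : ℕ))

variable (m) in
def longCycleSeq (i : ℕ) : Bool × Fin m :=
  if i < 3 then (true, i)
  else if i ≤ m then (false, (i - 1 : ℕ))
  else if i ≤ 2 * m - 3 then (true, (2 * m - i : ℕ))
  else (false, 0)

theorem cycleGraph_isContained_hamiltonianSeq : cycleGraph (2 * m) ⊑ ladderLike m := by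
  have hm := NeZero.pos m
  refine cycleGraph_isContained_of_injOn (f := hamiltonianSeq m) ?_ (fun i hi => ?_) ?_
  · intro i hi j hj h
    simp only [Set.mem_Iio] at hi hj
    unfold hamiltonianSeq at h
    split_ifs at h <;> simp (disch := omega) [Fin.ext_iff, Nat.mod_eq_of_lt] at h <;> omega
  all_goals
    unfold hamiltonianSeq
    split_ifs <;> apply adj_of_val <;>
      simp (disch := omega) only [Fin.val_natCast, Nat.mod_eq_of_lt] <;> simp <;> omega

theorem cycleGraph_isContained_longCycleSeq (hm : 4 ≤ m) :
    cycleGraph (2 * m - 1) ⊑ ladderLike m := by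
  refine cycleGraph_isContained_of_injOn (f := longCycleSeq m) ?_ (fun i hi => ?_) ?_
  · intro i hi j hj h
    simp only [Set.mem_Iio] at hi hj
    unfold longCycleSeq at h
    split_ifs at h <;> simp (disch := omega) [Fin.ext_iff, Nat.mod_eq_of_lt] at h <;> omega
  all_goals
    unfold longCycleSeq
    split_ifs <;> apply adj_of_val <;>
      simp (disch := omega) only [Fin.val_natCast, Nat.mod_eq_of_lt] <;> simp <;> omega

theorem exists_isHamiltonianCycle (hm : 2 ≤ m) :
    ∃ (v : Bool × Fin m) (c : (ladderLike m).Walk v v), c.IsHamiltonianCycle := by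
  obtain ⟨v, c, hc, hlen⟩ :=
    (cycleGraph_isContained_iff (by omega)).mp (cycleGraph_isContained_hamiltonianSeq (m := m))
  exact ⟨v, c, Walk.isHamiltonianCycle_iff_isCycle_and_length_eq.mpr ⟨hc, by simp [hlen]⟩⟩

theorem hasCycleOfLength_two_mul_sub_one (hm : 4 ≤ m) :
    HasCycleOfLength (ladderLike m) (2 * m - 1) :=
  (cycleGraph_isContained_iff (by omega)).mp (cycleGraph_isContained_longCycleSeq hm)

end ladderLike

theorem ladderLike_long_cycles (m : ℕ) [NeZero m] (hm : 6 ≤ m) :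
    HasCycleOfLength (ladderLike m) (2 * m - 1) ∧
      ∃ (v : Bool × Fin m) (c : (ladderLike m).Walk v v), c.IsHamiltonianCycle :=
  ⟨ladderLike.hasCycleOfLength_two_mul_sub_one (by omega),
    ladderLike.exists_isHamiltonianCycle (by omega)⟩
end

section
/- Let m ≥ 6 and let G be a ladder-like graph on 2m vertices with the edges u_1 v_1 and u_4 v_4 removed. Then for every odd ℓ with 5 ≤ ℓ ≤ 2m − 1, G contains a cycle of length ℓ. -/
open SimpleGraph

/-!
The cycles are written down explicitly as concatenations of arcs of the two rims, using
the extra edges `u₁v₄`, `u₄v₁` in place of the deleted rungs: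
* `u₁ u₂ v₂ v₃ v₄` has length `5`;
* `u₁ u₂ ⋯ u_{k+2} v_{k+2} v_{k+1} ⋯ v₄` has length `2k + 1` for `3 ≤ k ≤ m - 2`;
* `v₁ u₄ u₅ ⋯ u_m u₁ u₂ u₃ v₃ v₄ ⋯ v_m` has length `2m - 1`.
-/

theorem hasCycleOfLength_of_isChain {V : Type*} {G : SimpleGraph V} {l : List V} {n : ℕ}
    (hlen : l.length = n) (hn : 3 ≤ n) (hnd : l.Nodup) (hchain : l.IsChain G.Adj)
    (hclose : ∀ x ∈ l.getLast?, ∀ y ∈ l.head?, G.Adj x y) : HasCycleOfLength G n := by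
  subst hlen
  have hne : l ≠ [] := List.ne_nil_of_length_pos (by omega)
  have hadj := hclose _ (List.getLast?_eq_some_getLast hne) _ (List.head?_eq_some_head hne)
  refine ⟨_, .cons hadj (.ofSupport l hne hchain), ?_, by simp; omega⟩
  rw [Walk.isCycle_iff_isPath_tail_and_le_length]
  simp [Walk.isPath_def, hnd]
  omega

namespace ladderLikeMinus

open Fin.NatCast

variable {m : ℕ} [NeZero m]

lemma natCast_inj {i j : ℕ} (hi : i < m) (hj : j < m) : (i : Fin m) = j ↔ i = j := by
  simp [Fin.ext_iff, Fin.val_natCast, Nat.mod_eq_of_lt hi, Nat.mod_eq_of_lt hj]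

lemma adj_of_ladderLike_adj {p q : Bool × Fin m} (h : (ladderLike m).Adj p q)
    (hpq : p.2 = q.2 → p.2 ≠ 0 ∧ p.2 ≠ 3) : (ladderLikeMinus m).Adj p q := by
  refine deleteEdges_adj.2 ⟨h, ?_⟩
  obtain ⟨b, i⟩ := p
  obtain ⟨c, j⟩ := q
  simp only [Set.mem_insert_iff, Set.mem_singleton_iff, Sym2.eq_iff, Prod.ext_iff]
  aesop

lemma adj_succ (b : Bool) {i : ℕ} (hi : i + 1 < m) :
    (ladderLikeMinus m).Adj (b, (i : Fin m)) (b, ((i + 1 : ℕ) : Fin m)) := by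
  have hne : (i : Fin m) ≠ ((i + 1 : ℕ) : Fin m) :=
    fun h => by simpa using (natCast_inj (by omega) hi).1 h
  exact adj_of_ladderLike_adj (Or.inl ⟨rfl, hne, Or.inl (by push_cast; rfl)⟩) (absurd · hne)

lemma adj_last_zero (b : Bool) (hm : 2 ≤ m) :
    (ladderLikeMinus m).Adj (b, ((m - 1 : ℕ) : Fin m)) (b, 0) := by
  have hlast : ((m - 1 : ℕ) : Fin m) + 1 = 0 := by
    rw [← Nat.cast_succ, Nat.succ_eq_add_one, Nat.sub_add_cancel (by omega), Fin.natCast_self]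
  have hne : ((m - 1 : ℕ) : Fin m) ≠ 0 := fun h => by
    have := (natCast_inj (m := m) (i := m - 1) (j := 0) (by omega) (by omega)).1 (by simpa using h)
    omega
  exact adj_of_ladderLike_adj (Or.inl ⟨rfl, hne, Or.inl hlast.symm⟩) (absurd · hne)

lemma adj_rung {i : ℕ} (hm : 4 ≤ m) (hi : i < m) (h0 : i ≠ 0) (h3 : i ≠ 3) :
    (ladderLikeMinus m).Adj (false, (i : Fin m)) (true, (i : Fin m)) := by
  refine adj_of_ladderLike_adj (Or.inr ⟨by simp, Or.inl rfl⟩) fun _ => ⟨?_, ?_⟩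
  · simpa using (natCast_inj (j := 0) hi (by omega)).not.2 h0
  · simpa using (natCast_inj (j := 3) hi (by omega)).not.2 h3

lemma adj_cross (b : Bool) (hm : 4 ≤ m) : (ladderLikeMinus m).Adj (b, 0) (!b, 3) := by
  have h30 : (3 : Fin m) ≠ 0 := by simp [Fin.ext_iff, Nat.mod_eq_of_lt (show 3 < m by omega)]
  exact adj_of_ladderLike_adj (Or.inr ⟨Bool.self_ne_not b, Or.inr (Or.inl ⟨rfl, rfl⟩)⟩)
    fun h => absurd h.symm h30

def rim (m : ℕ) [NeZero m] (b : Bool) (a n : ℕ) : List (Bool × Fin m) :=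
  (List.range' a n).map fun i : ℕ => (b, (i : Fin m))

section rim

variable {b : Bool} {a n : ℕ}

@[simp]
lemma length_rim : (rim m b a n).length = n := by
  simp [rim]

lemma mem_rim (h : a + n ≤ m) {p : Bool × Fin m} :
    p ∈ rim m b a n ↔ p.1 = b ∧ a ≤ p.2.val ∧ p.2.val < a + n := by
  obtain ⟨c, j⟩ := p
  simp only [rim, List.mem_map, List.mem_range'_1, Prod.mk.injEq]
  constructor
  · rintro ⟨i, hi, rfl, rfl⟩
    simp [Fin.val_natCast, Nat.mod_eq_of_lt (show i < m by omega), hi]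
  · rintro ⟨rfl, hj⟩
    exact ⟨j, hj, rfl, by simp⟩

lemma rim_nodup (h : a + n ≤ m) : (rim m b a n).Nodup :=
  (List.nodup_range' (s := a) (n := n)).map_on fun i hi j hj hij =>
    (natCast_inj (m := m) (by simp at hi; omega) (by simp at hj; omega)).1 (Prod.ext_iff.1 hij).2

lemma rim_isChain (h : a + n ≤ m) : (rim m b a n).IsChain (ladderLikeMinus m).Adj := by
  rw [rim, List.isChain_map]
  refine (List.isChain_range' a n 1).imp_of_mem_imp fun i j _ hj hij => ?_
  subst hij
  exact adj_succ b (by simp at hj; omega)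

@[simp]
lemma head?_rim : (rim m b a (n + 1)).head? = some (b, (a : Fin m)) := by
  simp [rim, List.range'_succ]

@[simp]
lemma getLast?_rim : (rim m b a (n + 1)).getLast? = some (b, ((a + n : ℕ) : Fin m)) := by
  simp [rim, List.range'_concat]

end rim

theorem hasCycleOfLength_five (hm : 4 ≤ m) : HasCycleOfLength (ladderLikeMinus m) 5 := by
  have h₁ : 0 + 2 ≤ m := by omega
  have h₂ : 1 + 3 ≤ m := by omega
  refine hasCycleOfLength_of_isChain (l := rim m false 0 2 ++ rim m true 1 3) (by simp)
    (by norm_num) ?_ ?_ ?_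
  · simp only [List.nodup_append, rim_nodup, mem_rim, h₁, h₂]
    grind
  · refine (rim_isChain h₁).append (rim_isChain h₂) ?_
    simpa using adj_rung (i := 1) hm (by omega) one_ne_zero (by norm_num)
  · simpa using (adj_cross false hm).symm

theorem hasCycleOfLength_two_mul_add_one {k : ℕ} (hk : 3 ≤ k) (hkm : k + 2 ≤ m) :
    HasCycleOfLength (ladderLikeMinus m) (2 * k + 1) := by
  obtain ⟨j, hj⟩ : ∃ j, k - 1 = j + 1 := ⟨k - 2, by omega⟩
  have h₁ : 0 + (k + 2) ≤ m := by omega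
  have h₂ : 3 + (k - 1) ≤ m := by omega
  refine hasCycleOfLength_of_isChain
    (l := rim m false 0 (k + 2) ++ (rim m true 3 (k - 1)).reverse) (by simp; omega) (by omega)
    ?_ ?_ ?_
  · simp only [List.nodup_append, List.nodup_reverse, List.mem_reverse, rim_nodup, mem_rim,
      h₁, h₂]
    grind
  · refine (rim_isChain h₁).append
      (List.isChain_reverse.2 ((rim_isChain h₂).imp fun _ _ h => h.symm)) ?_
    simp only [hj, getLast?_rim, List.head?_reverse, Option.mem_def, Option.some.injEq]
    rintro _ rfl _ rfl
    rw [show 3 + j = 0 + (k + 1) by omega]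
    exact adj_rung (by omega) (by omega) (by omega) (by omega)
  · simpa [hj] using (adj_cross false (by omega)).symm

theorem hasCycleOfLength_two_mul_sub_one (hm : 4 ≤ m) :
    HasCycleOfLength (ladderLikeMinus m) (2 * m - 1) := by
  obtain ⟨j, hj⟩ : ∃ j, m - 3 = j + 1 := ⟨m - 4, by omega⟩
  have hj' : m - 2 = (j + 1) + 1 := by omega
  have h₁ : 0 + 1 ≤ m := by omega
  have h₂ : 3 + (m - 3) ≤ m := by omega
  have h₃ : 0 + 3 ≤ m := by omega
  have h₄ : 2 + (m - 2) ≤ m := by omega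
  refine hasCycleOfLength_of_isChain
    (l := rim m true 0 1 ++ rim m false 3 (m - 3) ++ rim m false 0 3 ++ rim m true 2 (m - 2))
    (by simp; omega) (by omega) ?_ ?_ ?_
  · simp only [List.nodup_append, List.mem_append, rim_nodup, mem_rim, h₁, h₂, h₃, h₄]
    grind
  · refine (((rim_isChain h₁).append (rim_isChain h₂) ?_).append (rim_isChain h₃) ?_).append
      (rim_isChain h₄) ?_
    · simpa [hj] using adj_cross true hm
    · simp only [List.getLast?_append, hj, getLast?_rim, show 3 + j = m - 1 by omega]
      simpa using adj_last_zero false (by omega)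
    · simp only [hj', head?_rim]
      simpa using adj_rung (i := 2) hm (by omega) (by omega) (by omega)
  · simp only [List.getLast?_append, hj', getLast?_rim, show 2 + (j + 1) = m - 1 by omega,
      List.head?_append]
    simpa using adj_last_zero true (by omega)

end ladderLikeMinus

theorem ladderLikeMinus_odd_cycles (m : ℕ) [NeZero m] (hm : 6 ≤ m) :
    ∀ ℓ : ℕ, Odd ℓ → 5 ≤ ℓ → ℓ ≤ 2 * m - 1 →
      HasCycleOfLength (ladderLikeMinus m) ℓ := by
  rintro ℓ ⟨k, rfl⟩ h5 hle
  obtain rfl | hk2 := eq_or_ne k 2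
  · exact ladderLikeMinus.hasCycleOfLength_five (by omega)
  obtain rfl | hkm := eq_or_ne (k + 1) m
  · simpa [Nat.mul_add] using
      ladderLikeMinus.hasCycleOfLength_two_mul_sub_one (m := k + 1) (by omega)
  · exact ladderLikeMinus.hasCycleOfLength_two_mul_add_one (by omega) (by omega)
end
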